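/- arXiv:0912.5178 — 2 statements merged into one kernel-verified Lean document; each statement's English description precedes it below -/
import Mathlib

section
/- Assume L is a domain, ℰ is a paving on E, and ν is an L-valued maxitive measure on ℰ. Then for every compact set K ∈ 𝒦, the supremum ⊕_{x ∈ K} c*(x) exists in L and equals ν*(K); that is, the restriction of ν* to 𝒦 admits c* as a cardinal density. -/
open Set

variable {E L : Type*}

/-- A prepaving on `E`: a collection of subsets containing `∅` and closed under
(binary, hence finite) unions. -/
def IsPrepaving (ℰ : Set (Set E)) : Prop :=
  ∅ ∈ ℰ ∧ ∀ A ∈ ℰ, ∀ B ∈ ℰ, A ∪ B ∈ ℰ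

/-- A paving on `E`: a prepaving covering `E` such that, for every `x`, the
collection `{G ∈ ℰ : x ∈ G}` is nonempty and filtered under inclusion. -/
def IsPaving (ℰ : Set (Set E)) : Prop :=
  IsPrepaving ℰ ∧ ∀ x : E, (∃ G ∈ ℰ, x ∈ G) ∧
    ∀ G ∈ ℰ, x ∈ G → ∀ G' ∈ ℰ, x ∈ G' → ∃ H ∈ ℰ, x ∈ H ∧ H ⊆ G ∧ H ⊆ G'

/-- An ideal of the prepaving `ℰ`: a nonempty subset of `ℰ` closed under finite
unions and downward closed (within `ℰ`). -/
def IsIdealOf (ℰ 𝓘 : Set (Set E)) : Prop :=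
  𝓘.Nonempty ∧ 𝓘 ⊆ ℰ ∧ (∀ A ∈ 𝓘, ∀ B ∈ 𝓘, A ∪ B ∈ 𝓘) ∧
    ∀ A ∈ ℰ, ∀ B ∈ 𝓘, A ⊆ B → A ∈ 𝓘

/-- A filter of a poset: a nonempty, (downward) filtered, upward-closed subset. -/
def IsFilterSet [PartialOrder L] (F : Set L) : Prop :=
  F.Nonempty ∧ (∀ x ∈ F, ∀ y ∈ F, ∃ z ∈ F, z ≤ x ∧ z ≤ y) ∧
    ∀ x ∈ F, ∀ y : L, x ≤ y → y ∈ F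

/-- `y` is way-above `x`: for every filter `F` possessing an infimum `a`,
`a ≤ x` implies `y ∈ F`. -/
def WayAbove [PartialOrder L] (y x : L) : Prop :=
  ∀ F : Set L, IsFilterSet F → ∀ a : L, IsGLB F a → a ≤ x → y ∈ F

/-- A continuous poset: for every `x`, `↟x = {y : y ≫ x}` is a filter with
infimum `x`. -/
def ContinuousPoset (L : Type*) [PartialOrder L] : Prop :=
  ∀ x : L, IsFilterSet {y : L | WayAbove y x} ∧ IsGLB {y : L | WayAbove y x} x

/-- A domain: a continuous poset in which every filter has an infimum. -/
def DomainPoset (L : Type*) [PartialOrder L] : Prop :=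
  ContinuousPoset L ∧ ∀ F : Set L, IsFilterSet F → ∃ a : L, IsGLB F a

/-- A locally complete poset: every upper-bounded subset has a supremum. -/
def LocallyComplete (L : Type*) [PartialOrder L] : Prop :=
  ∀ S : Set L, BddAbove S → ∃ a : L, IsLUB S a

/-- A maxitive measure on `ℰ`: `ν ∅ = 0`, and for every finite family of
elements of `ℰ` whose union lies in `ℰ`, the supremum of the values exists and
equals the value of the union. -/
def IsMaxitive [PartialOrder L] [OrderBot L] (ℰ : Set (Set E)) (ν : Set E → L) : Prop :=
  ν ∅ = ⊥ ∧ ∀ S : Finset (Set E), (∀ G ∈ S, G ∈ ℰ) → ⋃₀ (S : Set (Set E)) ∈ ℰ →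
    IsLUB (ν '' (S : Set (Set E))) (ν (⋃₀ (S : Set (Set E))))

/-- A completely maxitive measure on `ℰ`: as above, but for arbitrary families. -/
def IsCompletelyMaxitive [PartialOrder L] [OrderBot L] (ℰ : Set (Set E)) (ν : Set E → L) : Prop :=
  ν ∅ = ⊥ ∧ ∀ 𝒢 : Set (Set E), 𝒢 ⊆ ℰ → ⋃₀ 𝒢 ∈ ℰ →
    IsLUB (ν '' 𝒢) (ν (⋃₀ 𝒢))

open Classical in
/-- The infimum of `S` when it exists, `⊥` otherwise. -/
noncomputable def pInf [PartialOrder L] [OrderBot L] (S : Set L) : L :=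
  if h : ∃ a : L, IsGLB S a then h.choose else ⊥

open Classical in
/-- The supremum of `S` when it exists, `⊥` otherwise. -/
noncomputable def pSup [PartialOrder L] [OrderBot L] (S : Set L) : L :=
  if h : ∃ a : L, IsLUB S a then h.choose else ⊥

/-- `ℰ*`: the collection of subsets `A` of `E` such that `{G ∈ ℰ : A ⊆ G}` is
nonempty and filtered under inclusion. -/
def EStar (ℰ : Set (Set E)) : Set (Set E) :=
  {A | (∃ G ∈ ℰ, A ⊆ G) ∧
    ∀ G ∈ ℰ, A ⊆ G → ∀ G' ∈ ℰ, A ⊆ G' → ∃ H ∈ ℰ, A ⊆ H ∧ H ⊆ G ∧ H ⊆ G'}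

/-- The extension `ν*` of `ν`: `ν*(A) = ⋀ {ν G : G ∈ ℰ, A ⊆ G}`. -/
noncomputable def nuStar [PartialOrder L] [OrderBot L] (ℰ : Set (Set E))
    (ν : Set E → L) (A : Set E) : L :=
  pInf (ν '' {G ∈ ℰ | A ⊆ G})

/-- `𝒦`: the compact subsets of `E` for the topology generated by `ℰ`. -/
def Kpt (ℰ : Set (Set E)) : Set (Set E) :=
  {K | @IsCompact E (TopologicalSpace.generateFrom ℰ) K}

/-- `ℱ = {F ⊆ E : F ∈ ℰ* and Fᶜ ∈ ℰ}`. -/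
def Fcl (ℰ : Set (Set E)) : Set (Set E) :=
  {F | F ∈ EStar ℰ ∧ Fᶜ ∈ ℰ}

/-- `ℋ = 𝒦 ∩ ℱ`. -/
def Hcf (ℰ : Set (Set E)) : Set (Set E) := Kpt ℰ ∩ Fcl ℰ

/-- The regular part `⌊ν⌋(G) = ⊕ {ν*(K) : K ∈ 𝒦, K ⊆ G}`. -/
noncomputable def regPart [PartialOrder L] [OrderBot L] (ℰ : Set (Set E))
    (ν : Set E → L) (G : Set E) : L :=
  pSup (nuStar ℰ ν '' {K ∈ Kpt ℰ | K ⊆ G})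

/-- `r` is the residual part of `ν`: the smallest maxitive measure such that
`ν = ⌊ν⌋ ⊕ r` on `ℰ`. -/
def IsResidualPart [Lattice L] [OrderBot L] (ℰ : Set (Set E)) (ν r : Set E → L) : Prop :=
  IsMaxitive ℰ r ∧ (∀ G ∈ ℰ, ν G = regPart ℰ ν G ⊔ r G) ∧
    ∀ τ : Set E → L, IsMaxitive ℰ τ → (∀ G ∈ ℰ, ν G = regPart ℰ ν G ⊔ τ G) →
      ∀ G ∈ ℰ, r G ≤ τ G

section Aux
variable [PartialOrder L] [OrderBot L]

private lemma upcl_isFilterSet {S : Set L} (hne : S.Nonempty)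
    (hfil : ∀ x ∈ S, ∀ y ∈ S, ∃ z ∈ S, z ≤ x ∧ z ≤ y) :
    IsFilterSet {z : L | ∃ s ∈ S, s ≤ z} := by
  refine ⟨?_, ?_, ?_⟩
  · obtain ⟨s, hs⟩ := hne; exact ⟨s, s, hs, le_rfl⟩
  · rintro x ⟨s, hs, hsx⟩ y ⟨t, ht, hty⟩
    obtain ⟨z, hz, hzs, hzt⟩ := hfil s hs t ht
    exact ⟨z, ⟨z, hz, le_rfl⟩, hzs.trans hsx, hzt.trans hty⟩
  · rintro x ⟨s, hs, hsx⟩ y hxy; exact ⟨s, hs, hsx.trans hxy⟩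

private lemma upcl_isGLB_iff {S : Set L} {a : L} :
    IsGLB {z : L | ∃ s ∈ S, s ≤ z} a ↔ IsGLB S a := by
  have hlb : lowerBounds {z : L | ∃ s ∈ S, s ≤ z} = lowerBounds S := by
    ext l; constructor
    · intro hl s hs; exact hl ⟨s, hs, le_rfl⟩
    · rintro hl z ⟨s, hs, hsz⟩; exact (hl hs).trans hsz
  unfold IsGLB IsGreatest; rw [hlb]

private lemma exists_isGLB_of_filtered (hL : DomainPoset L) {S : Set L}
    (hne : S.Nonempty) (hfil : ∀ x ∈ S, ∀ y ∈ S, ∃ z ∈ S, z ≤ x ∧ z ≤ y) :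
    ∃ a : L, IsGLB S a := by
  obtain ⟨a, ha⟩ := hL.2 _ (upcl_isFilterSet hne hfil)
  exact ⟨a, upcl_isGLB_iff.mp ha⟩

private lemma pInf_isGLB {S : Set L} (h : ∃ a : L, IsGLB S a) : IsGLB S (pInf S) := by
  rw [pInf, dif_pos h]; exact h.choose_spec

end Aux

private lemma sUnion_finset_mem {ℰ : Set (Set E)} (hpre : IsPrepaving ℰ)
    (S : Finset (Set E)) (hS : ∀ G ∈ S, G ∈ ℰ) : ⋃₀ (S : Set (Set E)) ∈ ℰ := by
  classical
  induction S using Finset.induction_on with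
  | empty => simpa using hpre.1
  | insert a s hnmem ih =>
      have : ⋃₀ ((insert a s : Finset (Set E)) : Set (Set E)) = a ∪ ⋃₀ (s : Set (Set E)) := by
        simp [Set.sUnion_insert]
      rw [this]
      exact hpre.2 a (hS a (Finset.mem_insert_self a s)) _
        (ih fun G hG => hS G (Finset.mem_insert_of_mem hG))

/-- Finite subcover packaged for pavings. -/
private lemma compact_subcover {ℰ : Set (Set E)} (hpre : IsPrepaving ℰ)
    {K : Set E} (hK : K ∈ Kpt ℰ) (f : E → Set E)
    (hf : ∀ x ∈ K, f x ∈ ℰ ∧ x ∈ f x) :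
    ∃ S : Finset (Set E), (∀ G ∈ S, ∃ x ∈ K, G = f x) ∧
      K ⊆ ⋃₀ (S : Set (Set E)) ∧ ⋃₀ (S : Set (Set E)) ∈ ℰ := by
  classical
  letI : TopologicalSpace E := TopologicalSpace.generateFrom ℰ
  have hKc : IsCompact K := hK
  have hcov : K ⊆ ⋃ i : K, f i.1 := fun x hx =>
    Set.mem_iUnion.mpr ⟨⟨x, hx⟩, (hf x hx).2⟩
  obtain ⟨t, ht⟩ := hKc.elim_finite_subcover (fun i : K => f i.1)
    (fun i => TopologicalSpace.GenerateOpen.basic _ (hf i.1 i.2).1) hcov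
  refine ⟨t.image (fun i => f i.1), ?_, ?_, ?_⟩
  · intro G hG
    obtain ⟨i, _, rfl⟩ := Finset.mem_image.mp hG
    exact ⟨i.1, i.2, rfl⟩
  · intro x hx
    obtain ⟨i, hi, hxi⟩ := Set.mem_iUnion₂.mp (ht hx)
    exact ⟨f i.1, Finset.mem_coe.mpr (Finset.mem_image_of_mem _ hi), hxi⟩
  · apply sUnion_finset_mem hpre
    intro G hG
    obtain ⟨i, _, rfl⟩ := Finset.mem_image.mp hG
    exact (hf i.1 i.2).1

private lemma nu_mono [PartialOrder L] [OrderBot L] {ℰ : Set (Set E)} {ν : Set E → L}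
    (hν : IsMaxitive ℰ ν) {A B : Set E} (hA : A ∈ ℰ) (hB : B ∈ ℰ) (hAB : A ⊆ B) :
    ν A ≤ ν B := by
  classical
  have hU : ⋃₀ (({A, B} : Finset (Set E)) : Set (Set E)) = B := by
    simp [Set.sUnion_insert, Set.union_eq_right.mpr hAB]
  have hmem : ∀ G ∈ ({A, B} : Finset (Set E)), G ∈ ℰ := by
    intro G hG
    rcases Finset.mem_insert.mp hG with rfl | hG
    · exact hA
    · rw [Finset.mem_singleton] at hG; subst hG; exact hB
  have h2 := hν.2 {A, B} hmem (by rw [hU]; exact hB)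
  rw [hU] at h2
  exact h2.1 ⟨A, by simp, rfl⟩

/-- the restriction of `ν*` to the compact sets admits
`c* : x ↦ ν*({x})` as a cardinal density. -/
theorem nuStar_compact_density [PartialOrder L] [OrderBot L]
    (hL : DomainPoset L)
    (ℰ : Set (Set E)) (hpav : IsPaving ℰ)
    (ν : Set E → L) (hν : IsMaxitive ℰ ν)
    (K : Set E) (hK : K ∈ Kpt ℰ) :
    IsLUB ((fun x : E => nuStar ℰ ν {x}) '' K) (nuStar ℰ ν K) := by
  classical
  have hpre := hpav.1
  set 𝒢K : Set (Set E) := {G ∈ ℰ | K ⊆ G} with h𝒢K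
  -- 𝒢K is nonempty
  have hKne : 𝒢K.Nonempty := by
    have hf : ∀ x ∈ K, (hpav.2 x).1.choose ∈ ℰ ∧ x ∈ (hpav.2 x).1.choose := by
      intro x hx
      obtain ⟨h1, h2⟩ := (hpav.2 x).1.choose_spec
      exact ⟨h1, h2⟩
    obtain ⟨S, _, hKS, hSℰ⟩ := compact_subcover hpre hK _ hf
    exact ⟨_, hSℰ, hKS⟩
  -- 𝒢K is filtered (under inclusion)
  have hKfil : ∀ G ∈ 𝒢K, ∀ G' ∈ 𝒢K, ∃ H ∈ 𝒢K, H ⊆ G ∧ H ⊆ G' := by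
    rintro G ⟨hG, hKG⟩ G' ⟨hG', hKG'⟩
    have hex : ∀ x ∈ K, ∃ H ∈ ℰ, x ∈ H ∧ H ⊆ G ∧ H ⊆ G' := fun x hx =>
      (hpav.2 x).2 G hG (hKG hx) G' hG' (hKG' hx)
    choose! f hf1 hf2 hf3 hf4 using hex
    obtain ⟨S, hSf, hKS, hSℰ⟩ := compact_subcover hpre hK f
      (fun x hx => ⟨hf1 x hx, hf2 x hx⟩)
    refine ⟨⋃₀ (S : Set (Set E)), ⟨hSℰ, hKS⟩, ?_, ?_⟩
    · rintro y ⟨H, hH, hyH⟩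
      obtain ⟨x, hx, rfl⟩ := hSf H hH
      exact hf3 x hx hyH
    · rintro y ⟨H, hH, hyH⟩
      obtain ⟨x, hx, rfl⟩ := hSf H hH
      exact hf4 x hx hyH
  -- the image ν '' 𝒢K is filtered, so its GLB exists
  have himfilK : ∀ a ∈ ν '' 𝒢K, ∀ b ∈ ν '' 𝒢K, ∃ c ∈ ν '' 𝒢K, c ≤ a ∧ c ≤ b := by
    rintro a ⟨G, hG, rfl⟩ b ⟨G', hG', rfl⟩
    obtain ⟨H, hH, hHG, hHG'⟩ := hKfil G hG G' hG'
    exact ⟨ν H, ⟨H, hH, rfl⟩, nu_mono hν hH.1 hG.1 hHG, nu_mono hν hH.1 hG'.1 hHG'⟩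
  have hglbK : IsGLB (ν '' 𝒢K) (nuStar ℰ ν K) :=
    pInf_isGLB (exists_isGLB_of_filtered hL (hKne.image ν) himfilK)
  -- singleton sets: 𝒢x nonempty and filtered, GLB exists
  have hsing : ∀ x : E, IsGLB (ν '' {G ∈ ℰ | ({x} : Set E) ⊆ G}) (nuStar ℰ ν {x}) ∧
      (∀ a ∈ ν '' {G ∈ ℰ | ({x} : Set E) ⊆ G}, ∀ b ∈ ν '' {G ∈ ℰ | ({x} : Set E) ⊆ G},
        ∃ c ∈ ν '' {G ∈ ℰ | ({x} : Set E) ⊆ G}, c ≤ a ∧ c ≤ b) := by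
    intro x
    set 𝒢x : Set (Set E) := {G ∈ ℰ | ({x} : Set E) ⊆ G}
    have hne : 𝒢x.Nonempty := by
      obtain ⟨G, hG, hxG⟩ := (hpav.2 x).1
      exact ⟨G, hG, Set.singleton_subset_iff.mpr hxG⟩
    have hfil : ∀ a ∈ ν '' 𝒢x, ∀ b ∈ ν '' 𝒢x, ∃ c ∈ ν '' 𝒢x, c ≤ a ∧ c ≤ b := by
      rintro a ⟨G, ⟨hG, hxG⟩, rfl⟩ b ⟨G', ⟨hG', hxG'⟩, rfl⟩
      obtain ⟨H, hH, hxH, hHG, hHG'⟩ := (hpav.2 x).2 G hG (hxG rfl) G' hG' (hxG' rfl)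
      exact ⟨ν H, ⟨H, ⟨hH, Set.singleton_subset_iff.mpr hxH⟩, rfl⟩,
        nu_mono hν hH hG hHG, nu_mono hν hH hG' hHG'⟩
    exact ⟨pInf_isGLB (exists_isGLB_of_filtered hL (hne.image ν) hfil), hfil⟩
  constructor
  · -- upper bound
    rintro a ⟨x, hx, rfl⟩
    apply hglbK.2
    rintro b ⟨G, ⟨hG, hKG⟩, rfl⟩
    exact (hsing x).1.1 ⟨G, ⟨hG, Set.singleton_subset_iff.mpr (hKG hx)⟩, rfl⟩
  · -- least upper bound
    intro u hu
    -- for every y way-above u, nuStar K ≤ y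
    have key : ∀ y : L, WayAbove y u → nuStar ℰ ν K ≤ y := by
      intro y hy
      -- for each x ∈ K find G ∈ ℰ with x ∈ G and ν G ≤ y
      have hxG : ∀ x ∈ K, ∃ G ∈ ℰ, x ∈ G ∧ ν G ≤ y := by
        intro x hx
        have hcx : nuStar ℰ ν {x} ≤ u := hu ⟨x, hx, rfl⟩
        set S : Set L := ν '' {G ∈ ℰ | ({x} : Set E) ⊆ G}
        have hne : S.Nonempty := by
          obtain ⟨G, hG, hxG⟩ := (hpav.2 x).1
          exact ⟨ν G, ⟨G, ⟨hG, Set.singleton_subset_iff.mpr hxG⟩, rfl⟩⟩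
        have hF := upcl_isFilterSet hne (hsing x).2
        have hG : IsGLB {z : L | ∃ s ∈ S, s ≤ z} (nuStar ℰ ν {x}) :=
          upcl_isGLB_iff.mpr (hsing x).1
        obtain ⟨s, ⟨G, ⟨hGℰ, hxG⟩, rfl⟩, hsy⟩ := hy _ hF _ hG hcx
        exact ⟨G, hGℰ, Set.singleton_subset_iff.mp hxG, hsy⟩
      choose! f hf1 hf2 hf3 using hxG
      obtain ⟨S, hSf, hKS, hSℰ⟩ := compact_subcover hpre hK f
        (fun x hx => ⟨hf1 x hx, hf2 x hx⟩)
      have hlub := hν.2 S (by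
        intro G hG; obtain ⟨x, hx, rfl⟩ := hSf G hG; exact hf1 x hx) hSℰ
      have hUy : ν (⋃₀ (S : Set (Set E))) ≤ y := by
        apply hlub.2
        rintro b ⟨G, hG, rfl⟩
        obtain ⟨x, hx, rfl⟩ := hSf G hG
        exact hf3 x hx
      exact le_trans (hglbK.1 ⟨_, ⟨hSℰ, hKS⟩, rfl⟩) hUy
    have := (hL.1 u).2.2 key
    exact this
end

section
/- Assume L is a domain, ℰ is a paving on E, and ν is an L-valued maxitive measure on ℰ. The following are equivalent: (1) ν is completely maxitive; (2) ν is inner-continuous, i.e. for all G ∈ ℰ the supremum ⊕_{K ∈ 𝒦, K ⊆ G} ν*(K) exists and equals ν(G); (3) ν has a cardinal density, i.e. there exists c : E → L with ν(G) = ⊕_{x ∈ G} c(x) for all G ∈ ℰ. -/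
open Set

variable {E L : Type*}

section Aux

variable [PartialOrder L] [OrderBot L]

open Classical in
lemma maxitive_pair_lub {ℰ : Set (Set E)} {ν : Set E → L} (hν : IsMaxitive ℰ ν)
    {A B : Set E} (hA : A ∈ ℰ) (hB : B ∈ ℰ) (hAB : A ∪ B ∈ ℰ) :
    IsLUB {ν A, ν B} (ν (A ∪ B)) := by
  have h := hν.2 ({A, B} : Finset (Set E)) (by
    intro G hG
    simp only [Finset.mem_insert, Finset.mem_singleton] at hG
    rcases hG with rfl | rfl <;> assumption) (by simpa using hAB)
  simpa [Set.image_pair] using h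

lemma maxitive_mono {ℰ : Set (Set E)} {ν : Set E → L} (hν : IsMaxitive ℰ ν)
    {A B : Set E} (hA : A ∈ ℰ) (hB : B ∈ ℰ) (hAB : A ⊆ B) : ν A ≤ ν B := by
  have h := maxitive_pair_lub hν hA hB (by rwa [Set.union_eq_right.mpr hAB])
  rw [Set.union_eq_right.mpr hAB] at h
  exact h.1 (by simp)

lemma glb_of_directed (hL : DomainPoset L) {S : Set L} (hne : S.Nonempty)
    (hdir : ∀ x ∈ S, ∀ y ∈ S, ∃ z ∈ S, z ≤ x ∧ z ≤ y) :
    ∃ a : L, IsGLB S a ∧ IsGLB {y | ∃ s ∈ S, s ≤ y} a := by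
  set F : Set L := {y | ∃ s ∈ S, s ≤ y} with hF
  have hfil : IsFilterSet F := by
    refine ⟨?_, ?_, ?_⟩
    · obtain ⟨s, hs⟩ := hne; exact ⟨s, s, hs, le_rfl⟩
    · rintro x ⟨s, hs, hsx⟩ y ⟨t, ht, hty⟩
      obtain ⟨z, hz, hzs, hzt⟩ := hdir s hs t ht
      exact ⟨z, ⟨z, hz, le_rfl⟩, hzs.trans hsx, hzt.trans hty⟩
    · rintro x ⟨s, hs, hsx⟩ y hxy
      exact ⟨s, hs, hsx.trans hxy⟩
  obtain ⟨a, ha⟩ := hL.2 F hfil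
  refine ⟨a, ⟨fun s hs => ha.1 ⟨s, hs, le_rfl⟩, fun b hb => ha.2 ?_⟩, ha⟩
  rintro y ⟨s, hs, hsy⟩
  exact (hb hs).trans hsy

lemma nuStar_le_of_subset {ℰ : Set (Set E)} {ν : Set E → L} {K W : Set E}
    (hW : W ∈ ℰ) (hKW : K ⊆ W) : nuStar ℰ ν K ≤ ν W := by
  unfold nuStar pInf
  by_cases h : ∃ a : L, IsGLB (ν '' {G ∈ ℰ | K ⊆ G}) a
  · rw [dif_pos h]
    exact h.choose_spec.1 ⟨W, ⟨hW, hKW⟩, rfl⟩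
  · rw [dif_neg h]; exact bot_le

/-- In a domain, the set defining `ν*({x})` has a GLB, which is `ν*({x})`;
moreover the GLB of its upward closure is the same. -/
lemma nuStar_singleton_glb (hL : DomainPoset L) {ℰ : Set (Set E)}
    (hpav : IsPaving ℰ) {ν : Set E → L} (hν : IsMaxitive ℰ ν) (x : E) :
    IsGLB (ν '' {G ∈ ℰ | {x} ⊆ G}) (nuStar ℰ ν {x}) ∧
    IsGLB {y | ∃ s ∈ ν '' {G ∈ ℰ | {x} ⊆ G}, s ≤ y} (nuStar ℰ ν {x}) := by
  set S := ν '' {G ∈ ℰ | {x} ⊆ G} with hS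
  have hne : S.Nonempty := by
    obtain ⟨G, hG, hxG⟩ := (hpav.2 x).1
    exact ⟨ν G, G, ⟨hG, Set.singleton_subset_iff.mpr hxG⟩, rfl⟩
  have hdir : ∀ u ∈ S, ∀ v ∈ S, ∃ z ∈ S, z ≤ u ∧ z ≤ v := by
    rintro _ ⟨G, ⟨hG, hxG⟩, rfl⟩ _ ⟨G', ⟨hG', hxG'⟩, rfl⟩
    obtain ⟨H, hH, hxH, hHG, hHG'⟩ := (hpav.2 x).2 G hG (Set.singleton_subset_iff.mp hxG)
      G' hG' (Set.singleton_subset_iff.mp hxG')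
    exact ⟨ν H, ⟨H, ⟨hH, Set.singleton_subset_iff.mpr hxH⟩, rfl⟩,
      maxitive_mono hν hH hG hHG, maxitive_mono hν hH hG' hHG'⟩
  obtain ⟨a, haS, haF⟩ := glb_of_directed hL hne hdir
  have hex : ∃ b : L, IsGLB S b := ⟨a, haS⟩
  have : nuStar ℰ ν {x} = a := by
    unfold nuStar pInf
    rw [dif_pos hex]
    exact hex.choose_spec.unique haS
  rw [this]
  exact ⟨haS, haF⟩

lemma wayAbove_of_le {y b c : L} (h : WayAbove y b) (hcb : c ≤ b) : WayAbove y c :=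
  fun F hF a ha hac => h F hF a ha (hac.trans hcb)

lemma le_of_forall_wayAbove (hL : DomainPoset L) {x b : L}
    (h : ∀ y : L, WayAbove y b → x ≤ y) : x ≤ b :=
  (hL.1 b).2.2 h

/-- Core lemma: a completely maxitive measure on a paving over a domain has
`x ↦ ν*({x})` as a cardinal density. -/
lemma density_lub (hL : DomainPoset L) {ℰ : Set (Set E)} (hpav : IsPaving ℰ)
    {ν : Set E → L} (hν : IsMaxitive ℰ ν) (hcm : IsCompletelyMaxitive ℰ ν)
    {G : Set E} (hG : G ∈ ℰ) :
    IsLUB ((fun x => nuStar ℰ ν {x}) '' G) (ν G) := by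
  constructor
  · rintro _ ⟨x, hxG, rfl⟩
    exact (nuStar_singleton_glb hL hpav hν x).1.1
      ⟨G, ⟨hG, Set.singleton_subset_iff.mpr hxG⟩, rfl⟩
  · intro b hb
    refine le_of_forall_wayAbove hL fun y hy => ?_
    -- For each x ∈ G, y is way above ν*({x}), hence y dominates ν on some
    -- small element of ℰ containing x and included in G.
    set 𝒢 : Set (Set E) := {A | A ∈ ℰ ∧ A ⊆ G ∧ ν A ≤ y} with h𝒢
    have hcover : ⋃₀ 𝒢 = G := by
      apply Set.Subset.antisymm
      · exact Set.sUnion_subset fun A hA => hA.2.1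
      · intro x hxG
        have hcx : nuStar ℰ ν {x} ≤ b := hb ⟨x, hxG, rfl⟩
        have hy' : WayAbove y (nuStar ℰ ν {x}) := wayAbove_of_le hy hcx
        obtain ⟨hglbS, hglbF⟩ := nuStar_singleton_glb hL hpav hν x
        -- the upward closure is a filter; apply way-above
        have hfil : IsFilterSet {z | ∃ s ∈ ν '' {G' ∈ ℰ | {x} ⊆ G'}, s ≤ z} := by
          refine ⟨?_, ?_, ?_⟩
          · obtain ⟨G', hG', hxG'⟩ := (hpav.2 x).1
            exact ⟨ν G', ν G', ⟨G', ⟨hG', Set.singleton_subset_iff.mpr hxG'⟩, rfl⟩, le_rfl⟩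
          · rintro u ⟨_, ⟨A, ⟨hA, hxA⟩, rfl⟩, hAu⟩ v ⟨_, ⟨B, ⟨hB, hxB⟩, rfl⟩, hBv⟩
            obtain ⟨H, hH, hxH, hHA, hHB⟩ := (hpav.2 x).2 A hA
              (Set.singleton_subset_iff.mp hxA) B hB (Set.singleton_subset_iff.mp hxB)
            exact ⟨ν H, ⟨ν H, ⟨H, ⟨hH, Set.singleton_subset_iff.mpr hxH⟩, rfl⟩, le_rfl⟩,
              (maxitive_mono hν hH hA hHA).trans hAu,
              (maxitive_mono hν hH hB hHB).trans hBv⟩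
          · rintro u ⟨s, hs, hsu⟩ v huv
            exact ⟨s, hs, hsu.trans huv⟩
        have hyF := hy' _ hfil _ hglbF le_rfl
        obtain ⟨_, ⟨Gx, ⟨hGx, hxGx⟩, rfl⟩, hGxy⟩ := hyF
        obtain ⟨H, hH, hxH, hHG, hHGx⟩ := (hpav.2 x).2 G hG hxG Gx hGx
          (Set.singleton_subset_iff.mp hxGx)
        exact ⟨H, ⟨hH, hHG, (maxitive_mono hν hH hGx hHGx).trans hGxy⟩, hxH⟩
    have hlub := hcm.2 𝒢 (fun A hA => hA.1) (hcover ▸ hG)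
    rw [hcover] at hlub
    refine hlub.2 ?_
    rintro _ ⟨A, hA, rfl⟩
    exact hA.2.2

end Aux

/-- for a maxitive measure over a domain the following are
equivalent: complete maxitivity, inner continuity, existence of a cardinal
density. -/
theorem completelyMaxitive_iff_innerContinuous_iff_density
    [PartialOrder L] [OrderBot L]
    (hL : DomainPoset L)
    (ℰ : Set (Set E)) (hpav : IsPaving ℰ)
    (ν : Set E → L) (hν : IsMaxitive ℰ ν) :
    (IsCompletelyMaxitive ℰ ν ↔
      ∀ G ∈ ℰ, IsLUB (nuStar ℰ ν '' {K ∈ Kpt ℰ | K ⊆ G}) (ν G)) ∧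
    (IsCompletelyMaxitive ℰ ν ↔
      ∃ c : E → L, ∀ G ∈ ℰ, IsLUB (c '' G) (ν G)) := by
  classical
  constructor
  · -- (1) ↔ (2)
    constructor
    · intro hcm G hG
      constructor
      · rintro _ ⟨K, ⟨hK, hKG⟩, rfl⟩
        exact nuStar_le_of_subset hG hKG
      · intro b hb
        refine (density_lub hL hpav hν hcm hG).2 ?_
        rintro _ ⟨x, hx, rfl⟩
        exact hb ⟨{x}, ⟨@isCompact_singleton E (TopologicalSpace.generateFrom ℰ) x,
          Set.singleton_subset_iff.mpr hx⟩, rfl⟩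
    · intro h2
      refine ⟨hν.1, fun 𝒢 h𝒢 hU => ?_⟩
      constructor
      · rintro _ ⟨A, hA, rfl⟩
        exact maxitive_mono hν (h𝒢 hA) hU (Set.subset_sUnion_of_mem hA)
      · intro b hb
        refine (h2 _ hU).2 ?_
        rintro _ ⟨K, ⟨hK, hKU⟩, rfl⟩
        -- finite subcover of the compact K by elements of 𝒢
        have hopen : ∀ i : ↥𝒢, @IsOpen E (TopologicalSpace.generateFrom ℰ) (i : Set E) :=
          fun i => TopologicalSpace.GenerateOpen.basic _ (h𝒢 i.2)
        have hKU' : K ⊆ ⋃ i : ↥𝒢, (i : Set E) := by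
          rwa [← Set.sUnion_eq_iUnion]
        obtain ⟨t, ht⟩ := @IsCompact.elim_finite_subcover E (TopologicalSpace.generateFrom ℰ)
          K ↥𝒢 hK (fun i => (i : Set E)) hopen hKU'
        have key : ∀ s : Finset ↥𝒢,
            (⋃ i ∈ s, (i : Set E)) ∈ ℰ ∧ ν (⋃ i ∈ s, (i : Set E)) ≤ b := by
          intro s
          induction s using Finset.induction_on with
          | empty =>
            simp only [Finset.notMem_empty, Set.iUnion_of_empty, Set.iUnion_empty]
            exact ⟨hpav.1.1, by rw [hν.1]; exact bot_le⟩
          | insert a s hnot ih =>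
            rw [Finset.set_biUnion_insert]
            have haℰ : (a : Set E) ∈ ℰ := h𝒢 a.2
            have hUℰ : (a : Set E) ∪ ⋃ i ∈ s, (i : Set E) ∈ ℰ :=
              hpav.1.2 _ haℰ _ ih.1
            refine ⟨hUℰ, (maxitive_pair_lub hν haℰ ih.1 hUℰ).2 ?_⟩
            rintro z hz
            simp only [Set.mem_insert_iff, Set.mem_singleton_iff] at hz
            rcases hz with rfl | rfl
            · exact hb ⟨(a : Set E), a.2, rfl⟩
            · exact ih.2
        exact (nuStar_le_of_subset (key t).1 ht).trans (key t).2
  · -- (1) ↔ (3)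
    constructor
    · intro hcm
      exact ⟨fun x => nuStar ℰ ν {x}, fun G hG => density_lub hL hpav hν hcm hG⟩
    · rintro ⟨c, hc⟩
      refine ⟨hν.1, fun 𝒢 h𝒢 hU => ?_⟩
      constructor
      · rintro _ ⟨A, hA, rfl⟩
        exact maxitive_mono hν (h𝒢 hA) hU (Set.subset_sUnion_of_mem hA)
      · intro b hb
        refine (hc _ hU).2 ?_
        rintro _ ⟨x, hx, rfl⟩
        obtain ⟨A, hA, hxA⟩ := hx
        exact le_trans ((hc A (h𝒢 hA)).1 ⟨x, hxA, rfl⟩) (hb ⟨A, hA, rfl⟩)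
end
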